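/- Let d ≥ 1 be an integer, p ≥ 2, c > 0, and h, r > 0 with h ≤ r/√d. Define weights ω_β = h^d / (c · ω_d · r^{p+d}) for β ∈ ℤ^d with |hβ| < r and ω_β = 0 otherwise, where ω_d is the Lebesgue measure of the unit ball in ℝ^d. Then Σ_{β∈ℤ^d} ω_β ≤ 2^d / (c · r^p). -/

import Mathlib

/-!
The half-open cubes `h β + [0, h)^d` are pairwise disjoint, have volume `h^d`, and lie within
distance `h √d ≤ r` of `h β`. Those with `|h β| < r` therefore sit disjointly inside the ball of
radius `2r`, so their number `N` satisfies `N h^d ≤ (2r)^d ω_d`, while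
`Σ ω_β = N h^d / (c ω_d r^(p+d))`.
-/

open MeasureTheory

/-- The grid point `y_β = h β ∈ ℝ^d` for `β ∈ ℤ^d`. -/
noncomputable def ygrid (d : ℕ) (h : ℝ) (β : Fin d → ℤ) : EuclideanSpace ℝ (Fin d) :=
  (WithLp.equiv 2 (Fin d → ℝ)).symm (fun i => h * (β i : ℝ))

open Set Metric ENNReal Function

lemma EuclideanSpace.norm_le_sqrt_card_mul {ι : Type*} [Fintype ι] {x : EuclideanSpace ℝ ι}
    {a : ℝ} (ha : 0 ≤ a) (hx : ∀ i, |x i| ≤ a) : ‖x‖ ≤ √(Fintype.card ι) * a := by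
  rw [EuclideanSpace.norm_eq, ← Real.sqrt_sq ha, ← Real.sqrt_mul (Nat.cast_nonneg _)]
  refine Real.sqrt_le_sqrt ?_
  calc ∑ i, ‖x i‖ ^ 2 ≤ ∑ _i : ι, a ^ 2 := by
        gcongr with i
        rw [Real.norm_eq_abs]
        exact hx i
    _ = Fintype.card ι * a ^ 2 := by simp

@[simp]
lemma ygrid_apply (d : ℕ) (h : ℝ) (β : Fin d → ℤ) (i : Fin d) : ygrid d h β i = h * β i := rfl

def gridCell (d : ℕ) (h : ℝ) (β : Fin d → ℤ) : Set (EuclideanSpace ℝ (Fin d)) :=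
  {x | ∀ i, x i ∈ Ico (h * β i) (h * β i + h)}

section gridCell

variable {d : ℕ} {h : ℝ}

lemma gridCell_eq_preimage (β : Fin d → ℤ) :
    gridCell d h β = WithLp.ofLp ⁻¹' univ.pi fun i => Ico (h * β i) (h * β i + h) := by
  ext x; simp [gridCell]

lemma measurableSet_gridCell (β : Fin d → ℤ) : MeasurableSet (gridCell d h β) := by
  rw [gridCell_eq_preimage]
  exact (MeasurableSet.univ_pi fun _ => measurableSet_Ico).preimage (by fun_prop)

lemma volume_gridCell (β : Fin d → ℤ) : volume (gridCell d h β) = .ofReal h ^ d := by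
  rw [gridCell_eq_preimage, (PiLp.volume_preserving_ofLp _).measure_preimage
    (MeasurableSet.univ_pi fun _ => measurableSet_Ico).nullMeasurableSet, volume_pi_pi]
  simp [Real.volume_Ico]

lemma eq_floor_of_mem_gridCell (hh : 0 < h) {β : Fin d → ℤ} {x : EuclideanSpace ℝ (Fin d)}
    (hx : x ∈ gridCell d h β) (i : Fin d) : β i = ⌊x i / h⌋ := by
  obtain ⟨hlo, hhi⟩ := hx i
  rw [eq_comm, Int.floor_eq_iff, le_div_iff₀ hh, div_lt_iff₀ hh]
  exact ⟨by linarith, by linarith⟩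

lemma pairwise_disjoint_gridCell (hh : 0 < h) : Pairwise (Disjoint on (gridCell d h)) := by
  intro β γ hne
  refine Set.disjoint_left.2 fun x hβ hγ => hne (funext fun i => ?_)
  rw [eq_floor_of_mem_gridCell hh hβ, eq_floor_of_mem_gridCell hh hγ]

lemma norm_sub_ygrid_le_of_mem_gridCell (hh : 0 ≤ h) {β : Fin d → ℤ}
    {x : EuclideanSpace ℝ (Fin d)} (hx : x ∈ gridCell d h β) :
    ‖x - ygrid d h β‖ ≤ √d * h := by
  have := EuclideanSpace.norm_le_sqrt_card_mul hh (x := x - ygrid d h β) fun i => by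
    obtain ⟨hlo, hhi⟩ := hx i
    rw [PiLp.sub_apply, ygrid_apply, abs_le]
    constructor <;> linarith
  simpa using this

end gridCell

lemma card_mul_pow_le_of_forall_norm_ygrid_lt {d : ℕ} {h R : ℝ} (hh : 0 < h) (hR : 0 < R)
    (T : Finset (Fin d → ℤ)) (hT : ∀ β ∈ T, ‖ygrid d h β‖ < R) :
    (T.card : ℝ) * h ^ d ≤
      (R + √d * h) ^ d * (volume (ball (0 : EuclideanSpace ℝ (Fin d)) 1)).toReal := by
  have hR' : 0 < R + √d * h := by positivity
  have hsub : ⋃ β ∈ T, gridCell d h β ⊆ ball 0 (R + √d * h) := by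
    refine iUnion₂_subset fun β hβ x hx => ?_
    rw [mem_ball_zero_iff]
    calc ‖x‖ ≤ ‖ygrid d h β‖ + ‖x - ygrid d h β‖ := norm_le_norm_add_norm_sub' x _
      _ < R + √d * h := add_lt_add_of_lt_of_le (hT β hβ)
          (norm_sub_ygrid_le_of_mem_gridCell hh.le hx)
  have key : (T.card : ℝ≥0∞) * .ofReal h ^ d ≤
      .ofReal ((R + √d * h) ^ d) * volume (ball (0 : EuclideanSpace ℝ (Fin d)) 1) :=
    calc (T.card : ℝ≥0∞) * .ofReal h ^ d = ∑ β ∈ T, volume (gridCell d h β) := by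
          simp [volume_gridCell]
      _ = volume (⋃ β ∈ T, gridCell d h β) :=
          (measure_biUnion_finset ((pairwise_disjoint_gridCell hh).set_pairwise _)
            fun β _ => measurableSet_gridCell β).symm
      _ ≤ volume (ball (0 : EuclideanSpace ℝ (Fin d)) (R + √d * h)) := measure_mono hsub
      _ = _ := by rw [Measure.addHaar_ball_of_pos _ _ hR', finrank_euclideanSpace_fin]
  have := ENNReal.toReal_mono (mul_ne_top ofReal_ne_top measure_ball_lt_top.ne) key
  simpa [toReal_ofReal hh.le, toReal_ofReal (pow_nonneg hR'.le d)] using this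

lemma finite_setOf_norm_ygrid_lt {d : ℕ} {h : ℝ} (hh : 0 < h) (R : ℝ) :
    {β : Fin d → ℤ | ‖ygrid d h β‖ < R}.Finite := by
  set C := (|R| + 1 + √d * h) ^ d * (volume (ball (0 : EuclideanSpace ℝ (Fin d)) 1)).toReal
  refine Set.not_infinite.1 fun hinf => ?_
  obtain ⟨T, hTS, hT⟩ := hinf.exists_subset_card_eq (⌊C / h ^ d⌋₊ + 1)
  have hbound := card_mul_pow_le_of_forall_norm_ygrid_lt hh (by positivity) T
    fun β hβ => (hTS hβ).out.trans_le ((le_abs_self R).trans (le_add_of_nonneg_right zero_le_one))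
  rw [hT, ← le_div_iff₀ (by positivity)] at hbound
  exact (Nat.lt_floor_add_one (C / h ^ d)).not_ge (by exact_mod_cast hbound)

theorem sum_weights_le_general (d : ℕ) (p : ℝ) (c : ℝ) (hc : 0 < c)
    (h r : ℝ) (hh : 0 < h) (hr : 0 < r) (hhr : h ≤ r / Real.sqrt d)
    (ω : (Fin d → ℤ) → ℝ)
    (hω : ∀ β, ω β = if ‖ygrid d h β‖ < r then
      h ^ d / (c * (volume (Metric.ball (0 : EuclideanSpace ℝ (Fin d)) 1)).toReal *
        r ^ (p + (d : ℝ))) else 0) :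
    ∑ᶠ β, ω β ≤ 2 ^ d / (c * r ^ p) := by
  set ωd := (volume (ball (0 : EuclideanSpace ℝ (Fin d)) 1)).toReal
  have hωd : 0 < ωd := toReal_pos (measure_ball_pos _ _ one_pos).ne' measure_ball_lt_top.ne
  set S := {β : Fin d → ℤ | ‖ygrid d h β‖ < r}
  have hS : S.Finite := finite_setOf_norm_ygrid_lt hh r
  have hsum : ∑ᶠ β, ω β = hS.toFinset.card * (h ^ d / (c * ωd * r ^ (p + d))) := by
    have : ω = S.indicator fun _ => h ^ d / (c * ωd * r ^ (p + d)) := by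
      ext β; simp [hω, indicator_apply, S]
    rw [this, ← finsum_mem_def, finsum_mem_eq_finite_toFinset_sum _ hS, Finset.sum_const,
      nsmul_eq_mul]
  have hsqrt : √d * h ≤ r := by
    rcases (Real.sqrt_nonneg d).eq_or_lt with h0 | hpos
    · rw [← h0, zero_mul]; exact hr.le
    · rwa [le_div_iff₀ hpos, mul_comm] at hhr
  have hcount : (hS.toFinset.card : ℝ) * h ^ d ≤ (2 * r) ^ d * ωd :=
    (card_mul_pow_le_of_forall_norm_ygrid_lt hh hr _ fun β hβ => hS.mem_toFinset.1 hβ).trans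
      (by gcongr; linarith)
  rw [hsum, Real.rpow_add hr, Real.rpow_natCast, mul_div_assoc']
  calc _ ≤ (2 * r) ^ d * ωd / (c * ωd * (r ^ p * r ^ d)) := by gcongr
    _ = 2 ^ d / (c * r ^ p) := by field_simp; ring

/-- The weights of the discretization of Section 5.2 satisfy `Σ_β ω_β ≤ 2^d/(c r^p)`. -/
theorem sum_weights_le (d : ℕ) (hd : 1 ≤ d) (p : ℝ) (hp : 2 ≤ p) (c : ℝ) (hc : 0 < c)
    (h r : ℝ) (hh : 0 < h) (hr : 0 < r) (hhr : h ≤ r / Real.sqrt d)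
    (ω : (Fin d → ℤ) → ℝ)
    (hω : ∀ β, ω β = if ‖ygrid d h β‖ < r then
      h ^ d / (c * (volume (Metric.ball (0 : EuclideanSpace ℝ (Fin d)) 1)).toReal *
        r ^ (p + (d : ℝ))) else 0) :
    ∑ᶠ β, ω β ≤ 2 ^ d / (c * r ^ p) :=
  sum_weights_le_general d p c hc h r hh hr hhr ω hω
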